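/- arXiv:2011.09802 — 2 statements merged into one kernel-verified Lean document; each statement's English description precedes it below -/
import Mathlib

section
/- In dimension d = 1: (i) for every λ ∈ (0,1) there exists δ > 0 such that Σ_{n∈ℤ} e^{δ·n}·G^KRW_λ(0,n) < ∞; consequently the inverse correlation length ν_1(λ) = −lim_{n→∞} (1/n)·log G^KRW_λ(0,n) is strictly positive for every λ ∈ (0,1) (i.e. λ_exp^KRW = 1); and (ii) Σ_{n≥1} ψ(n)·(1 + e^{−2n|1|}) > 1, i.e. the saturation threshold λ̃ = (Σ_{n≥1} ψ(n)·(1 + e^{−2n|1|}))^{−1} satisfies λ̃ < 1. In particular, the KRW in d = 1 satisfies λ_sat < λ_exp. -/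
open Filter Topology

noncomputable section

namespace KRWaux

open scoped ENNReal

def W (w : ℤ → ℝ≥0∞) (l : List ℤ) : ℝ≥0∞ := (l.map w).prod

lemma W_append (w : ℤ → ℝ≥0∞) (l₁ l₂ : List ℤ) : W w (l₁ ++ l₂) = W w l₁ * W w l₂ := by
  simp [W]

lemma tsum_fin (w : ℤ → ℝ≥0∞) (k : ℕ) :
    ∑' f : Fin k → ℤ, ∏ i, w (f i) = (∑' s, w s) ^ k := by
  induction k with
  | zero =>
      rw [pow_zero, tsum_eq_single (fun _ => 0)]
      · simp
      · intro f hf; exact absurd (Subsingleton.elim f _) hf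
  | succ k ih =>
      have he := (Fin.consEquiv (fun _ : Fin (k+1) => ℤ)).tsum_eq
        (fun f : Fin (k+1) → ℤ => ∏ i, w (f i))
      have key : ∀ p : ℤ × (Fin k → ℤ),
          (∏ i, w ((Fin.consEquiv (fun _ : Fin (k+1) => ℤ)) p i))
            = w p.1 * ∏ i, w (p.2 i) := by
        intro p
        rw [Fin.prod_univ_succ]
        simp [Fin.consEquiv]
      refine Eq.trans he.symm (Eq.trans (tsum_congr key) ?_)
      refine Eq.trans (ENNReal.tsum_prod (f := fun a (f : Fin k → ℤ) => w a * ∏ i, w (f i))) ?_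
      simp_rw [ENNReal.tsum_mul_left, ih]
      rw [ENNReal.tsum_mul_right, pow_succ]
      ring

lemma tsum_list (w : ℤ → ℝ≥0∞) :
    ∑' l : List ℤ, W w l = ∑' k : ℕ, (∑' s, w s) ^ k := by
  rw [← (List.equivSigmaTuple (α := ℤ)).symm.tsum_eq (W w), ENNReal.tsum_sigma']
  refine tsum_congr fun k => ?_
  rw [← tsum_fin w k]
  refine tsum_congr fun f => ?_
  show W w (List.ofFn f) = _
  rw [W, List.map_ofFn, List.prod_ofFn]
  rfl

def walks (n : ℤ) : Set (List ℤ) := {l | (∀ s ∈ l, s ≠ 0) ∧ l.sum = n}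

def fpw (n : ℤ) : Set (List ℤ) :=
  {l | (∀ s ∈ l, s ≠ 0) ∧ l.sum = n ∧ ∀ i < l.length, (l.take i).sum ≠ n}

lemma W_eq_zero {w : ℤ → ℝ≥0∞} (hw0 : w 0 = 0) {l : List ℤ} (hl : ¬ ∀ s ∈ l, s ≠ 0) :
    W w l = 0 := by
  push_neg at hl
  obtain ⟨s, hs, hs0⟩ := hl
  subst hs0
  exact List.prod_eq_zero (hw0 ▸ List.mem_map_of_mem (f := w) hs)

lemma tsum_walks_eq {w : ℤ → ℝ≥0∞} (hw0 : w 0 = 0) :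
    ∑' n : ℤ, ∑' l : walks n, W w l = ∑' l : List ℤ, W w l := by
  have h1 : ∀ n : ℤ, ∑' l : walks n, W w (l : List ℤ)
      = ∑' l : List ℤ, (walks n).indicator (W w) l := fun n => tsum_subtype _ _
  simp_rw [h1]
  rw [ENNReal.tsum_comm]
  refine tsum_congr fun l => ?_
  by_cases hz : ∀ s ∈ l, s ≠ 0
  · have hmem : l ∈ walks l.sum := by
      simp only [walks, Set.mem_setOf_eq]
      exact ⟨hz, trivial⟩
    have hside : ∀ n, n ≠ l.sum → (walks n).indicator (W w) l = 0 := by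
      intro n hn
      apply Set.indicator_of_notMem
      intro h
      simp only [walks, Set.mem_setOf_eq] at h
      exact hn h.2.symm
    rw [tsum_eq_single l.sum hside]
    exact Set.indicator_of_mem hmem _
  · have hW : W w l = 0 := W_eq_zero hw0 hz
    have : ∀ n : ℤ, (walks n).indicator (W w) l = 0 := by
      intro n
      by_cases h : l ∈ walks n
      · rw [Set.indicator_of_mem h, hW]
      · exact Set.indicator_of_notMem h _
    simp [this, hW]

lemma W_tilt (w : ℤ → ℝ≥0∞) (δ : ℝ) (l : List ℤ) :
    W (fun s => w s * ENNReal.ofReal (Real.exp (δ * (s : ℝ)))) l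
      = W w l * ENNReal.ofReal (Real.exp (δ * (l.sum : ℝ))) := by
  induction l with
  | nil => simp [W]
  | cons a t ih =>
      simp only [W, List.map_cons, List.prod_cons] at ih ⊢
      rw [ih, List.sum_cons]
      have h : Real.exp (δ * ((a + t.sum : ℤ) : ℝ))
          = Real.exp (δ * (a : ℝ)) * Real.exp (δ * (t.sum : ℝ)) := by
        rw [← Real.exp_add]
        push_cast
        ring_nf
      rw [h, ENNReal.ofReal_mul (Real.exp_nonneg _)]
      ring

lemma tsum_mul_tsum {α β : Type*} (f : α → ℝ≥0∞) (g : β → ℝ≥0∞) :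
    ∑' p : α × β, f p.1 * g p.2 = (∑' a, f a) * (∑' b, g b) := by
  refine Eq.trans (ENNReal.tsum_prod (f := fun a b => f a * g b)) ?_
  simp_rw [ENNReal.tsum_mul_left]
  exact ENNReal.tsum_mul_right

lemma cat_mem {n m : ℤ} {l₁ l₂ : List ℤ} (h₁ : l₁ ∈ fpw n) (h₂ : l₂ ∈ walks m) :
    l₁ ++ l₂ ∈ walks (n + m) := by
  refine ⟨fun s hs => ?_, ?_⟩
  · rcases List.mem_append.mp hs with h | h
    exacts [h₁.1 s h, h₂.1 s h]
  · rw [List.sum_append, h₁.2.1, h₂.2]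

lemma cat_inj_aux {n : ℤ} {l₁ l₂ l₁' l₂' : List ℤ} (h : l₁ ++ l₂ = l₁' ++ l₂')
    (h₁ : l₁.sum = n) (h₁' : ∀ i < l₁'.length, (l₁'.take i).sum ≠ n)
    (hlen : l₁.length ≤ l₁'.length) : l₁ = l₁' := by
  have hp : l₁ <+: l₁' :=
    List.prefix_of_prefix_length_le (h ▸ List.prefix_append l₁ l₂)
      (List.prefix_append l₁' l₂') hlen
  rcases eq_or_lt_of_le hlen with he | hl
  · exact hp.eq_of_length he
  · exfalso
    have h2 := h₁
    rw [List.prefix_iff_eq_take.mp hp] at h2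
    exact h₁' _ hl h2

lemma cat_injective (n m : ℤ) : Function.Injective
    (fun p : fpw n × walks m => (⟨p.1.1 ++ p.2.1, cat_mem p.1.2 p.2.2⟩ : walks (n+m))) := by
  rintro ⟨⟨l₁, hl₁⟩, ⟨l₂, hl₂⟩⟩ ⟨⟨l₁', hl₁'⟩, ⟨l₂', hl₂'⟩⟩ h
  simp only [Subtype.mk.injEq] at h
  have h11 : l₁ = l₁' := by
    rcases le_total l₁.length l₁'.length with hle | hle
    · exact cat_inj_aux h hl₁.2.1 hl₁'.2.2 hle
    · exact (cat_inj_aux h.symm hl₁'.2.1 hl₁.2.2 hle).symm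
  subst h11
  have h22 : l₂ = l₂' := List.append_cancel_left h
  simp [h22]

lemma F_mul_G_le (w : ℤ → ℝ≥0∞) (n m : ℤ) :
    (∑' l : fpw n, W w (l : List ℤ)) * (∑' l : walks m, W w (l : List ℤ))
      ≤ ∑' l : walks (n+m), W w (l : List ℤ) := by
  refine le_trans (le_of_eq (tsum_mul_tsum (fun l : fpw n => W w (l : List ℤ))
    (fun l : walks m => W w (l : List ℤ))).symm) ?_
  refine le_trans (le_of_eq (tsum_congr fun p : fpw n × walks m =>
    (W_append w p.1.1 p.2.1).symm)) ?_
  exact ENNReal.tsum_comp_le_tsum_of_injective (cat_injective n m)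
    (fun l : walks (n+m) => W w (l : List ℤ))

lemma G_le_F_mul_G0 (w : ℤ → ℝ≥0∞) (n : ℤ) :
    (∑' l : walks n, W w (l : List ℤ))
      ≤ (∑' l : fpw n, W w (l : List ℤ)) * (∑' l : walks 0, W w (l : List ℤ)) := by
  classical
  have hex : ∀ l : walks n, ∃ i, ((l : List ℤ).take i).sum = n := fun l =>
    ⟨(l : List ℤ).length, by rw [List.take_length]; exact l.2.2⟩
  have hle : ∀ l : walks n, Nat.find (hex l) ≤ (l : List ℤ).length := fun l =>
    Nat.find_le (by rw [List.take_length]; exact l.2.2)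
  set σ : walks n → fpw n × walks 0 := fun l =>
    (⟨(l : List ℤ).take (Nat.find (hex l)), by
        refine ⟨fun s hs => l.2.1 s (List.take_subset _ _ hs), Nat.find_spec (hex l), ?_⟩
        intro i hi
        have hlen : ((l : List ℤ).take (Nat.find (hex l))).length = Nat.find (hex l) := by
          rw [List.length_take, min_eq_left (hle l)]
        rw [hlen] at hi
        rw [List.take_take, min_eq_left hi.le]
        exact Nat.find_min (hex l) hi⟩,
     ⟨(l : List ℤ).drop (Nat.find (hex l)), by
        refine ⟨fun s hs => l.2.1 s (List.drop_subset _ _ hs), ?_⟩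
        have hsum := List.sum_take_add_sum_drop (l : List ℤ) (Nat.find (hex l))
        have h1 := Nat.find_spec (hex l)
        have h2 := l.2.2
        omega⟩) with hσ
  have hσinj : Function.Injective σ := by
    intro a b hab
    apply Subtype.ext
    have ha : (a : List ℤ) = (σ a).1.1 ++ (σ a).2.1 := (List.take_append_drop _ _).symm
    have hb : (b : List ℤ) = (σ b).1.1 ++ (σ b).2.1 := (List.take_append_drop _ _).symm
    rw [ha, hb, hab]
  calc ∑' l : walks n, W w (l : List ℤ)
      = ∑' l : walks n, (fun p : fpw n × walks 0 =>
          W w (p.1 : List ℤ) * W w (p.2 : List ℤ)) (σ l) := by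
        refine tsum_congr fun l => ?_
        have hl : (l : List ℤ) = (σ l).1.1 ++ (σ l).2.1 := (List.take_append_drop _ _).symm
        conv_lhs => rw [hl]
        exact W_append w _ _
    _ ≤ ∑' p : fpw n × walks 0, W w (p.1 : List ℤ) * W w (p.2 : List ℤ) :=
        ENNReal.tsum_comp_le_tsum_of_injective hσinj _
    _ = _ := tsum_mul_tsum (fun l : fpw n => W w (l : List ℤ))
          (fun l : walks 0 => W w (l : List ℤ))




lemma summable_psi_exp (ψ : ℤ → ℝ) (hpos : ∀ n : ℤ, n ≠ 0 → 0 < ψ n)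
    (hsubexp : Tendsto (fun n : ℕ => Real.log (ψ (n : ℤ)) / (n : ℝ)) atTop (𝓝 0))
    (c : ℝ) (hc : 0 < c) :
    Summable (fun k : ℕ => ψ ((k : ℤ) + 1) * Real.exp (-(c * ((k : ℝ) + 1)))) := by
  have hev : ∀ᶠ n : ℕ in atTop, Real.log (ψ (n : ℤ)) / (n : ℝ) ≤ c / 2 :=
    hsubexp.eventually (eventually_le_nhds (by positivity))
  obtain ⟨N, hN⟩ := eventually_atTop.mp hev
  set r := Real.exp (-(c / 2)) with hr
  have hr0 : 0 ≤ r := Real.exp_nonneg _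
  have hr1 : r < 1 := by
    rw [hr, Real.exp_lt_one_iff]
    linarith
  rw [← summable_nat_add_iff N]
  have hbd : ∀ k : ℕ, ψ (((k + N : ℕ) : ℤ) + 1) * Real.exp (-(c * (((k + N : ℕ) : ℝ) + 1)))
      ≤ (r ^ (N + 1)) * r ^ k := by
    intro k
    have hψpos : 0 < ψ (((k + N + 1 : ℕ) : ℤ)) := hpos _ (by positivity)
    have hnpos : (0:ℝ) < ((k + N + 1 : ℕ) : ℝ) := by positivity
    have hlog : Real.log (ψ (((k + N + 1 : ℕ) : ℤ))) ≤ c / 2 * ((k + N + 1 : ℕ) : ℝ) := by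
      have h1 := hN (k + N + 1) (by omega)
      calc Real.log (ψ (((k + N + 1 : ℕ) : ℤ)))
          = Real.log (ψ (((k + N + 1 : ℕ) : ℤ))) / ((k + N + 1 : ℕ) : ℝ)
              * ((k + N + 1 : ℕ) : ℝ) := by field_simp
        _ ≤ c / 2 * ((k + N + 1 : ℕ) : ℝ) := mul_le_mul_of_nonneg_right h1 hnpos.le
    have hψ : ψ (((k + N + 1 : ℕ) : ℤ)) ≤ Real.exp (c / 2 * ((k + N + 1 : ℕ) : ℝ)) := by
      rw [← Real.exp_log hψpos]
      exact Real.exp_le_exp.mpr hlog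
    have e1 : ψ (((k + N : ℕ) : ℤ) + 1) = ψ (((k + N + 1 : ℕ) : ℤ)) := by push_cast; ring_nf
    have e2 : (-(c * (((k + N : ℕ) : ℝ) + 1))) = -(c * ((k + N + 1 : ℕ) : ℝ)) := by
      push_cast; ring
    have e3 : (r ^ (N + 1)) * r ^ k = Real.exp (-(c/2) * ((k + N + 1 : ℕ) : ℝ)) := by
      rw [hr, ← pow_add, ← Real.exp_nat_mul]
      congr 1
      push_cast
      ring
    rw [e1, e2, e3]
    calc ψ (((k + N + 1 : ℕ) : ℤ)) * Real.exp (-(c * ((k + N + 1 : ℕ) : ℝ)))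
        ≤ Real.exp (c/2 * ((k + N + 1 : ℕ) : ℝ)) * Real.exp (-(c * ((k + N + 1 : ℕ) : ℝ))) :=
          mul_le_mul_of_nonneg_right hψ (Real.exp_nonneg _)
      _ = Real.exp (-(c/2) * ((k + N + 1 : ℕ) : ℝ)) := by rw [← Real.exp_add]; ring_nf
  refine Summable.of_nonneg_of_le
    (fun k => mul_nonneg (hpos _ (by positivity)).le (Real.exp_nonneg _)) hbd ?_
  exact (summable_geometric_of_lt_one hr0 hr1).mul_left _


end KRWaux

/-- The killed random walk two-point function on `ℤ` (dimension one), with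
walks encoded by their lists of nonzero steps. -/
def KRW1 (lam : ℝ) (J : ℤ → ℝ) (x y : ℤ) : ENNReal :=
  ∑' l : {l : List ℤ // (∀ s ∈ l, s ≠ 0) ∧ l.sum = y - x},
    (l.1.map (fun s => ENNReal.ofReal (lam * J s))).prod

set_option maxHeartbeats 2000000 in
open KRWaux in
/-- For the KRW in dimension one: (i) for every `λ ∈ (0,1)` there
is `δ > 0` with `Σ_{n∈ℤ} e^{δn} G^KRW_λ(0,n) < ∞`, and the inverse correlation
length `ν_1(λ)` exists and is strictly positive (so `λ_exp = 1`); and (ii)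
`Σ_{n≥1} ψ(n)(1+e^{-2n|1|}) > 1`, i.e. the saturation threshold `λ̃` is `< 1`.
Here `b = |1| > 0` determines the norm on `ℝ`. -/
theorem statement13 (b : ℝ) (hb : 0 < b)
    (ψ : ℤ → ℝ)
    (hpos : ∀ n : ℤ, n ≠ 0 → 0 < ψ n)
    (heven : ∀ n : ℤ, ψ (-n) = ψ n)
    (hsubexp : Filter.Tendsto (fun n : ℕ => Real.log (ψ (n : ℤ)) / (n : ℝ))
      Filter.atTop (nhds 0))
    (J : ℤ → ℝ)
    (hJ : ∀ n : ℤ, J n = if n = 0 then 0 else ψ n * Real.exp (-(b * |(n : ℝ)|)))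
    (hnorm : HasSum (fun n : ℕ => ψ ((n : ℤ) + 1) * Real.exp (-(((n : ℝ) + 1) * b))) 2⁻¹) :
    (∀ lam : ℝ, 0 < lam → lam < 1 →
      (∃ δ : ℝ, 0 < δ ∧
        (∑' n : ℤ, ENNReal.ofReal (Real.exp (δ * (n : ℝ))) * KRW1 lam J 0 n) < ⊤) ∧
      (∃ ν : ℝ, 0 < ν ∧
        Filter.Tendsto (fun n : ℕ => -(Real.log ((KRW1 lam J 0 (n : ℤ)).toReal) / (n : ℝ)))
          Filter.atTop (nhds ν))) ∧
    (1 < ∑' n : ℕ,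
      ENNReal.ofReal (ψ ((n : ℤ) + 1) * (1 + Real.exp (-(2 * ((n : ℝ) + 1) * b))))) := by
  -- basic facts about J
  have hJ0 : J 0 = 0 := by rw [hJ]; simp
  have hJpos : ∀ n : ℤ, n ≠ 0 → 0 < J n := by
    intro n hn
    rw [hJ]
    simp only [hn, if_false]
    have : (n:ℝ) ≠ 0 := Int.cast_ne_zero.mpr hn
    have h1 := hpos n hn
    positivity
  have hJnonneg : ∀ n : ℤ, 0 ≤ J n := by
    intro n
    rcases eq_or_ne n 0 with rfl | hn
    · rw [hJ0]
    · exact (hJpos n hn).le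
  have hJcast : ∀ k : ℕ, J ((k:ℤ)+1) = ψ ((k:ℤ)+1) * Real.exp (-(b * ((k:ℝ)+1))) := by
    intro k
    have hne : ((k:ℤ)+1) ≠ 0 := by positivity
    rw [hJ]
    simp only [hne, if_false]
    congr 2
    rw [abs_of_pos (by positivity)]
    push_cast
    ring
  have hJneg : ∀ k : ℕ, J (-((k:ℤ)+1)) = J ((k:ℤ)+1) := by
    intro k
    have h1 : ∀ n : ℤ, n ≠ 0 → J (-n) = J n := by
      intro n hn
      have hn' : (-n : ℤ) ≠ 0 := neg_ne_zero.mpr hn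
      rw [hJ, hJ]
      simp only [hn, hn', if_false]
      rw [heven]
      congr 3
      push_cast
      rw [abs_neg]
    exact h1 _ (by positivity)
  -- summability of positive part for any positive rate
  have hsum_part : ∀ c : ℝ, 0 < c →
      Summable (fun k : ℕ => ψ ((k : ℤ) + 1) * Real.exp (-(c * ((k : ℝ) + 1)))) :=
    fun c hc => summable_psi_exp ψ hpos hsubexp c hc
  -- the full HasSum over ℤ for tilted J
  have key : ∀ δ : ℝ, |δ| ≤ b / 2 →
      HasSum (fun s : ℤ => J s * Real.exp (δ * (s:ℝ)))
        ((∑' k : ℕ, ψ ((k:ℤ)+1) * Real.exp (-((b - δ) * ((k:ℝ)+1)))) +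
         (∑' k : ℕ, ψ ((k:ℤ)+1) * Real.exp (-((b + δ) * ((k:ℝ)+1))))) := by
    intro δ hδ
    obtain ⟨hδ1, hδ2⟩ := abs_le.mp hδ
    have hbd1 : 0 < b - δ := by linarith
    have hbd2 : 0 < b + δ := by linarith
    have e1 : (fun k : ℕ => (fun s : ℤ => J s * Real.exp (δ * (s:ℝ))) ((k:ℤ)+1))
        = fun k : ℕ => ψ ((k:ℤ)+1) * Real.exp (-((b - δ) * ((k:ℝ)+1))) := by
      funext k
      show J ((k:ℤ)+1) * Real.exp (δ * (((k:ℤ)+1 : ℤ) : ℝ)) = _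
      rw [hJcast k, mul_assoc, ← Real.exp_add]
      congr 2
      push_cast
      ring
    have e2 : (fun k : ℕ => (fun s : ℤ => J s * Real.exp (δ * (s:ℝ))) (-((k:ℤ)+1)))
        = fun k : ℕ => ψ ((k:ℤ)+1) * Real.exp (-((b + δ) * ((k:ℝ)+1))) := by
      funext k
      show J (-((k:ℤ)+1)) * Real.exp (δ * ((-((k:ℤ)+1) : ℤ) : ℝ)) = _
      rw [hJneg k, hJcast k, mul_assoc, ← Real.exp_add]
      congr 2
      push_cast
      ring
    have h1 : HasSum (fun k : ℕ => (fun s : ℤ => J s * Real.exp (δ * (s:ℝ))) ((k:ℤ)+1))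
        (∑' k : ℕ, ψ ((k:ℤ)+1) * Real.exp (-((b - δ) * ((k:ℝ)+1)))) := by
      rw [e1]; exact (hsum_part _ hbd1).hasSum
    have h2 : HasSum (fun k : ℕ => (fun s : ℤ => J s * Real.exp (δ * (s:ℝ))) (-((k:ℤ)+1)))
        (∑' k : ℕ, ψ ((k:ℤ)+1) * Real.exp (-((b + δ) * ((k:ℝ)+1)))) := by
      rw [e2]; exact (hsum_part _ hbd2).hasSum
    have h3 := HasSum.of_add_one_of_neg_add_one (f := fun s : ℤ => J s * Real.exp (δ * (s:ℝ))) h1 h2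
    simpa [hJ0] using h3
  -- value at δ = 0
  have hhalf : ∀ c : ℝ, c = b →
      (∑' k : ℕ, ψ ((k:ℤ)+1) * Real.exp (-(c * ((k:ℝ)+1)))) = 2⁻¹ := by
    rintro c rfl
    rw [← hnorm.tsum_eq]
    refine tsum_congr fun k => ?_
    ring_nf
  have hJsum : HasSum J 1 := by
    have h := key 0 (by simp; positivity)
    have e0 : (fun s : ℤ => J s * Real.exp (0 * (s:ℝ))) = J := by
      funext s; simp
    rw [e0] at h
    rw [hhalf (b - 0) (by ring), hhalf (b + 0) (by ring)] at h
    have e : (2⁻¹ + 2⁻¹ : ℝ) = 1 := by norm_num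
    rwa [e] at h
  -- summability of the bound for DCT
  have hboundsum : Summable (fun s : ℤ => J s * Real.exp (b/2 * |(s:ℝ)|)) := by
    have habs1 : ∀ k : ℕ, |(((k:ℤ)+1 : ℤ):ℝ)| = (k:ℝ)+1 := by
      intro k; rw [abs_of_pos (by push_cast; positivity)]; push_cast; ring
    have habs2 : ∀ k : ℕ, |((-((k:ℤ)+1) : ℤ):ℝ)| = (k:ℝ)+1 := by
      intro k
      have : ((-((k:ℤ)+1) : ℤ):ℝ) = -(((k:ℤ)+1 : ℤ):ℝ) := by push_cast; ring
      rw [this, abs_neg]; exact habs1 k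
    have e1 : (fun k : ℕ => (fun s : ℤ => J s * Real.exp (b/2 * |(s:ℝ)|)) ((k:ℤ)+1))
        = fun k : ℕ => ψ ((k:ℤ)+1) * Real.exp (-(b/2 * ((k:ℝ)+1))) := by
      funext k
      show J ((k:ℤ)+1) * Real.exp (b/2 * |(((k:ℤ)+1 : ℤ):ℝ)|) = _
      rw [hJcast k, habs1 k, mul_assoc, ← Real.exp_add]
      congr 2
      ring
    have e2 : (fun k : ℕ => (fun s : ℤ => J s * Real.exp (b/2 * |(s:ℝ)|)) (-((k:ℤ)+1)))
        = fun k : ℕ => ψ ((k:ℤ)+1) * Real.exp (-(b/2 * ((k:ℝ)+1))) := by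
      funext k
      show J (-((k:ℤ)+1)) * Real.exp (b/2 * |((-((k:ℤ)+1) : ℤ):ℝ)|) = _
      rw [hJneg k, hJcast k, habs2 k, mul_assoc, ← Real.exp_add]
      congr 2
      ring
    refine Summable.of_add_one_of_neg_add_one ?_ ?_
    · rw [e1]; exact hsum_part (b/2) (by positivity)
    · rw [e2]; exact hsum_part (b/2) (by positivity)
  -- the vanishing sequence of tilts
  set dseq : ℕ → ℝ := fun j => b/2 * (1/((j:ℝ)+1)) with hdseq
  have hdpos : ∀ j, 0 < dseq j := by
    intro j; rw [hdseq]; positivity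
  have hdle : ∀ j, dseq j ≤ b/2 := by
    intro j
    rw [hdseq]
    have h1 : 1/((j:ℝ)+1) ≤ 1 := by
      rw [div_le_one (by positivity)]
      linarith [Nat.cast_nonneg (α := ℝ) j]
    calc b/2 * (1/((j:ℝ)+1)) ≤ b/2 * 1 := by
          exact mul_le_mul_of_nonneg_left h1 (by positivity)
      _ = b/2 := mul_one _
  have hdto : Tendsto dseq atTop (𝓝 0) := by
    have h1 : Tendsto (fun j : ℕ => 1/((j:ℝ)+1)) atTop (𝓝 0) :=
      tendsto_one_div_add_atTop_nhds_zero_nat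
    have := h1.const_mul (b/2)
    simpa [hdseq] using this
  -- dominated convergence
  have hDCT : Tendsto (fun j : ℕ => ∑' s : ℤ, J s * Real.exp (dseq j * (s:ℝ))) atTop
      (𝓝 (1:ℝ)) := by
    have h := tendsto_tsum_of_dominated_convergence (𝓕 := atTop)
      (f := fun (j : ℕ) (s : ℤ) => J s * Real.exp (dseq j * (s:ℝ)))
      (g := fun s : ℤ => J s) (bound := fun s : ℤ => J s * Real.exp (b/2 * |(s:ℝ)|))
      hboundsum ?_ ?_
    · rw [hJsum.tsum_eq] at h
      exact h
    · intro s
      have hc : Continuous fun d : ℝ => J s * Real.exp (d * (s:ℝ)) :=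
        continuous_const.mul (Real.continuous_exp.comp (continuous_id.mul continuous_const))
      have := (hc.tendsto 0).comp hdto
      simpa [Function.comp_def] using this
    · filter_upwards with j
      intro s
      rw [Real.norm_eq_abs, abs_mul, abs_of_nonneg (hJnonneg s), Real.abs_exp]
      refine mul_le_mul_of_nonneg_left ?_ (hJnonneg s)
      refine Real.exp_le_exp.mpr ?_
      calc dseq j * (s:ℝ) ≤ |dseq j * (s:ℝ)| := le_abs_self _
        _ = dseq j * |(s:ℝ)| := by rw [abs_mul, abs_of_pos (hdpos j)]
        _ ≤ b/2 * |(s:ℝ)| := mul_le_mul_of_nonneg_right (hdle j) (abs_nonneg _)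
  constructor
  · -- part (i)
    intro lam hlam0 hlam1
    -- choose the tilt δ
    have hone : (1:ℝ) < 1/lam := by
      rw [lt_div_iff₀ hlam0, one_mul]; exact hlam1
    obtain ⟨j, hj⟩ := (hDCT.eventually_lt_const hone).exists
    set δ : ℝ := dseq j with hδdef
    have hδpos : 0 < δ := hdpos j
    have hSlt : ∑' s : ℤ, J s * Real.exp (δ * (s:ℝ)) < 1/lam := hj
    have hsummδ : Summable (fun s : ℤ => J s * Real.exp (δ * (s:ℝ))) :=
      (key δ (by rw [abs_of_pos hδpos]; exact hdle j)).summable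
    -- ENNReal weights
    set w : ℤ → ENNReal := fun s => ENNReal.ofReal (lam * J s) with hwdef
    have hw0 : w 0 = 0 := by rw [hwdef]; simp [hJ0]
    have hwδ0 : w 0 * ENNReal.ofReal (Real.exp (δ * ((0:ℤ):ℝ))) = 0 := by
      rw [hw0, zero_mul]
    have hwsum : ∑' s : ℤ, w s = ENNReal.ofReal lam := by
      rw [hwdef]
      rw [← ENNReal.ofReal_tsum_of_nonneg (fun s => mul_nonneg hlam0.le (hJnonneg s))
        (hJsum.summable.mul_left lam)]
      rw [tsum_mul_left, hJsum.tsum_eq, mul_one]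
    have hwδsum_lt : (∑' s : ℤ, w s * ENNReal.ofReal (Real.exp (δ * (s:ℝ)))) < 1 := by
      have he : ∀ s : ℤ, w s * ENNReal.ofReal (Real.exp (δ * (s:ℝ)))
          = ENNReal.ofReal (lam * (J s * Real.exp (δ * (s:ℝ)))) := by
        intro s
        rw [hwdef]
        rw [← ENNReal.ofReal_mul (mul_nonneg hlam0.le (hJnonneg s))]
        congr 1
        ring
      calc (∑' s : ℤ, w s * ENNReal.ofReal (Real.exp (δ * (s:ℝ))))
          = ∑' s : ℤ, ENNReal.ofReal (lam * (J s * Real.exp (δ * (s:ℝ)))) := tsum_congr he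
        _ = ENNReal.ofReal (∑' s : ℤ, lam * (J s * Real.exp (δ * (s:ℝ)))) :=
            (ENNReal.ofReal_tsum_of_nonneg
              (fun s => mul_nonneg hlam0.le (mul_nonneg (hJnonneg s) (Real.exp_nonneg _)))
              (hsummδ.mul_left lam)).symm
        _ = ENNReal.ofReal (lam * ∑' s : ℤ, J s * Real.exp (δ * (s:ℝ))) := by
            rw [tsum_mul_left]
        _ < 1 := by
            refine ENNReal.ofReal_lt_one.mpr ?_
            rw [mul_comm]
            exact (lt_div_iff₀ hlam0).mp hSlt
    -- identify KRW1 with the walk sums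
    have hKRW : ∀ n : ℤ, KRW1 lam J 0 n = ∑' l : walks n, W w (l : List ℤ) := by
      intro n
      rw [hwdef]
      have hiff : ∀ l : List ℤ, ((∀ s ∈ l, s ≠ 0) ∧ l.sum = n - 0) ↔ l ∈ walks n := by
        intro l
        simp only [walks, Set.mem_setOf_eq, sub_zero]
      show (∑' l : {l : List ℤ // (∀ s ∈ l, s ≠ 0) ∧ l.sum = n - 0},
        (l.1.map (fun s => ENNReal.ofReal (lam * J s))).prod) = _
      rw [← ((Equiv.subtypeEquivRight hiff).tsum_eq (fun l : walks n =>
        W (fun s => ENNReal.ofReal (lam * J s)) (l : List ℤ)))]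
      refine tsum_congr fun l => ?_
      rw [Equiv.subtypeEquivRight_apply hiff l]
      rfl
    -- the tilted two-point sum is a geometric series
    have hG_tilt : (∑' n : ℤ, ENNReal.ofReal (Real.exp (δ * (n : ℝ))) * KRW1 lam J 0 n)
        = (1 - ∑' s : ℤ, w s * ENNReal.ofReal (Real.exp (δ * (s:ℝ))))⁻¹ := by
      have h1 : ∀ n : ℤ, ENNReal.ofReal (Real.exp (δ * (n : ℝ))) * KRW1 lam J 0 n
          = ∑' l : walks n, W (fun s => w s * ENNReal.ofReal (Real.exp (δ * (s:ℝ))))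
              (l : List ℤ) := by
        intro n
        rw [hKRW n, ← ENNReal.tsum_mul_left]
        refine tsum_congr fun l => ?_
        rw [W_tilt w δ (l : List ℤ), l.2.2, mul_comm]
      calc (∑' n : ℤ, ENNReal.ofReal (Real.exp (δ * (n : ℝ))) * KRW1 lam J 0 n)
          = ∑' n : ℤ, ∑' l : walks n,
              W (fun s => w s * ENNReal.ofReal (Real.exp (δ * (s:ℝ)))) (l : List ℤ) :=
            tsum_congr h1
        _ = ∑' l : List ℤ,
              W (fun s => w s * ENNReal.ofReal (Real.exp (δ * (s:ℝ)))) l :=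
            tsum_walks_eq hwδ0
        _ = ∑' k : ℕ, (∑' s : ℤ, w s * ENNReal.ofReal (Real.exp (δ * (s:ℝ)))) ^ k :=
            tsum_list _
        _ = _ := ENNReal.tsum_geometric _
    have htilt_lt : (∑' n : ℤ, ENNReal.ofReal (Real.exp (δ * (n : ℝ))) * KRW1 lam J 0 n) < ⊤ := by
      rw [hG_tilt]
      exact ENNReal.inv_lt_top.mpr (tsub_pos_of_lt hwδsum_lt)
    refine ⟨⟨δ, hδpos, htilt_lt⟩, ?_⟩
    -- now the inverse correlation length
    have hGtot : (∑' l : List ℤ, W w l) = (1 - ENNReal.ofReal lam)⁻¹ := by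
      rw [tsum_list w, hwsum, ENNReal.tsum_geometric]
    have hGtot_lt : (∑' l : List ℤ, W w l) < ⊤ := by
      rw [hGtot]
      exact ENNReal.inv_lt_top.mpr (tsub_pos_of_lt (ENNReal.ofReal_lt_one.mpr hlam1))
    have hG_le : ∀ n : ℤ, (∑' l : walks n, W w (l : List ℤ)) ≤ ∑' l : List ℤ, W w l :=
      fun n => ENNReal.tsum_comp_le_tsum_of_injective Subtype.coe_injective (W w)
    have hF_le : ∀ n : ℤ, (∑' l : fpw n, W w (l : List ℤ)) ≤ ∑' l : List ℤ, W w l :=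
      fun n => ENNReal.tsum_comp_le_tsum_of_injective Subtype.coe_injective (W w)
    have hfpw_sub : ∀ n : ℤ, fpw n ⊆ walks n := by
      intro n l hl
      simp only [fpw, Set.mem_setOf_eq] at hl
      exact ⟨hl.1, hl.2.1⟩
    have hFG : ∀ n : ℤ, (∑' l : fpw n, W w (l : List ℤ)) ≤ ∑' l : walks n, W w (l : List ℤ) :=
      fun n => ENNReal.tsum_mono_subtype (W w) (hfpw_sub n)
    have hGF : ∀ n : ℤ, (∑' l : walks n, W w (l : List ℤ))
        = (∑' l : fpw n, W w (l : List ℤ)) * (∑' l : walks 0, W w (l : List ℤ)) := by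
      intro n
      refine le_antisymm (G_le_F_mul_G0 w n) ?_
      have h := F_mul_G_le w n 0
      rwa [add_zero] at h
    have hsuper : ∀ n m : ℤ, (∑' l : fpw n, W w (l : List ℤ)) * (∑' l : fpw m, W w (l : List ℤ))
        ≤ (∑' l : fpw (n+m), W w (l : List ℤ)) * (∑' l : walks 0, W w (l : List ℤ)) := by
      intro n m
      calc (∑' l : fpw n, W w (l : List ℤ)) * (∑' l : fpw m, W w (l : List ℤ))
          ≤ (∑' l : fpw n, W w (l : List ℤ)) * (∑' l : walks m, W w (l : List ℤ)) :=
            mul_le_mul_right (hFG m) _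
        _ ≤ ∑' l : walks (n+m), W w (l : List ℤ) := F_mul_G_le w n m
        _ = _ := hGF (n+m)
    have hnil_walks0 : ([] : List ℤ) ∈ walks 0 := by
      simp only [walks, Set.mem_setOf_eq]
      exact ⟨by simp, by simp⟩
    have hnil_fpw0 : ([] : List ℤ) ∈ fpw 0 := by
      simp only [fpw, Set.mem_setOf_eq]
      refine ⟨by simp, by simp, ?_⟩
      intro i hi
      simp at hi
    have hsingle : ∀ n : ℤ, n ≠ 0 → [n] ∈ fpw n := by
      intro n hn
      simp only [fpw, Set.mem_setOf_eq]
      refine ⟨by simpa using hn, by simp, ?_⟩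
      intro i hi
      simp only [List.length_singleton] at hi
      have : i = 0 := by omega
      subst this
      simpa using (Ne.symm hn)
    have hWnil : W w ([] : List ℤ) = 1 := by simp [W]
    have hWsingle : ∀ n : ℤ, W w [n] = ENNReal.ofReal (lam * J n) := by
      intro n
      rw [hwdef]
      simp [W]
    have hFpos : ∀ n : ℤ, 0 < ∑' l : fpw n, W w (l : List ℤ) := by
      intro n
      rcases eq_or_ne n 0 with rfl | hn
      · calc (0:ENNReal) < 1 := one_pos
          _ = W w ([] : List ℤ) := hWnil.symm
          _ ≤ _ := ENNReal.le_tsum (⟨[], hnil_fpw0⟩ : fpw 0)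
      · calc (0:ENNReal) < ENNReal.ofReal (lam * J n) :=
            ENNReal.ofReal_pos.mpr (mul_pos hlam0 (hJpos n hn))
          _ = W w [n] := (hWsingle n).symm
          _ ≤ _ := ENNReal.le_tsum (⟨[n], hsingle n hn⟩ : fpw n)
    have hG0_ge1 : 1 ≤ ∑' l : walks 0, W w (l : List ℤ) := by
      calc (1:ENNReal) = W w ([] : List ℤ) := hWnil.symm
        _ ≤ _ := ENNReal.le_tsum (⟨[], hnil_walks0⟩ : walks 0)
    have hGtotne : (∑' l : List ℤ, W w l) ≠ ⊤ := hGtot_lt.ne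
    have hFne : ∀ n : ℤ, (∑' l : fpw n, W w (l : List ℤ)) ≠ ⊤ :=
      fun n => (lt_of_le_of_lt (hF_le n) hGtot_lt).ne
    have hGne : ∀ n : ℤ, (∑' l : walks n, W w (l : List ℤ)) ≠ ⊤ :=
      fun n => (lt_of_le_of_lt (hG_le n) hGtot_lt).ne
    set f : ℕ → ℝ := fun k => (∑' l : fpw (k : ℤ), W w (l : List ℤ)).toReal with hfdef
    set g0 : ℝ := (∑' l : walks 0, W w (l : List ℤ)).toReal with hg0def
    have hfpos : ∀ k : ℕ, 0 < f k := fun k => ENNReal.toReal_pos (hFpos _).ne' (hFne _)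
    have hg0_1 : 1 ≤ g0 := by
      rw [hg0def, ← ENNReal.toReal_one]
      exact ENNReal.toReal_mono (hGne 0) hG0_ge1
    have hg0pos : 0 < g0 := lt_of_lt_of_le one_pos hg0_1
    set C : ℝ := (∑' l : List ℤ, W w l).toReal with hCdef
    have hfC : ∀ k : ℕ, f k ≤ C := fun k => ENNReal.toReal_mono hGtotne (hF_le _)
    have hkey : ∀ m n : ℕ, f m * f n ≤ f (m + n) * g0 := by
      intro m n
      have h := hsuper (m : ℤ) (n : ℤ)
      rw [show ((m : ℤ) + (n : ℤ)) = ((m + n : ℕ) : ℤ) by push_cast; ring] at h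
      have h2 := ENNReal.toReal_mono (ENNReal.mul_ne_top (hFne _) (hGne 0)) h
      rwa [ENNReal.toReal_mul, ENNReal.toReal_mul] at h2
    set u : ℕ → ℝ := fun k => Real.log g0 - Real.log (f k) with hudef
    have hsubadd : Subadditive u := by
      intro m n
      have h1 : Real.log (f m * f n) ≤ Real.log (f (m+n) * g0) :=
        Real.log_le_log (mul_pos (hfpos m) (hfpos n)) (hkey m n)
      rw [Real.log_mul (hfpos m).ne' (hfpos n).ne',
        Real.log_mul (hfpos (m+n)).ne' hg0pos.ne'] at h1
      simp only [hudef]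
      linarith
    have hbdd : BddBelow (Set.range fun k : ℕ => u k / k) := by
      refine ⟨-|Real.log g0 - Real.log C|, ?_⟩
      rintro x ⟨k, rfl⟩
      have hK : Real.log g0 - Real.log C ≤ u k := by
        have h1 : Real.log (f k) ≤ Real.log C := Real.log_le_log (hfpos k) (hfC k)
        simp only [hudef]
        linarith
      cases k with
      | zero => simpa using neg_nonpos_of_nonneg (abs_nonneg _)
      | succ k =>
        have hkpos : (0:ℝ) < ((k+1 : ℕ) : ℝ) := by positivity
        rw [le_div_iff₀ hkpos]
        have h1le : (1:ℝ) ≤ ((k+1 : ℕ) : ℝ) := by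
          push_cast
          linarith [Nat.cast_nonneg (α := ℝ) k]
        calc -|Real.log g0 - Real.log C| * ((k+1:ℕ):ℝ)
            ≤ -|Real.log g0 - Real.log C| * 1 :=
              mul_le_mul_of_nonpos_left h1le (neg_nonpos_of_nonneg (abs_nonneg _))
          _ = -|Real.log g0 - Real.log C| := mul_one _
          _ ≤ Real.log g0 - Real.log C := neg_abs_le _
          _ ≤ u (k+1) := hK
    have hlim := hsubadd.tendsto_lim hbdd
    have hKtoReal : ∀ k : ℕ, (KRW1 lam J 0 (k:ℤ)).toReal = f k * g0 := by
      intro k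
      rw [hKRW, hGF (k:ℤ), ENNReal.toReal_mul]
    have htendsto : Tendsto (fun k : ℕ => -(Real.log ((KRW1 lam J 0 (k:ℤ)).toReal) / (k:ℝ)))
        atTop (𝓝 hsubadd.lim) := by
      have h2 : Tendsto (fun k : ℕ => u k / k - (2 * Real.log g0) * (1/(k:ℝ))) atTop
          (𝓝 (hsubadd.lim - (2*Real.log g0) * 0)) :=
        hlim.sub ((tendsto_one_div_atTop_nhds_zero_nat).const_mul _)
      rw [mul_zero, sub_zero] at h2
      refine Tendsto.congr' ?_ h2
      filter_upwards [eventually_ge_atTop 1] with k hk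
      have hkpos : (0:ℝ) < (k:ℝ) := by
        have : (1:ℝ) ≤ (k:ℝ) := by exact_mod_cast hk
        linarith
      rw [hKtoReal k, Real.log_mul (hfpos k).ne' hg0pos.ne']
      simp only [hudef]
      field_simp
      try ring
    refine ⟨hsubadd.lim, ?_, htendsto⟩
    -- positivity of the limit via the exponential tilt
    have hT1 : 1 ≤ (∑' n : ℤ, ENNReal.ofReal (Real.exp (δ * (n : ℝ))) * KRW1 lam J 0 n) := by
      have h0 := ENNReal.le_tsum (f := fun n : ℤ =>
        ENNReal.ofReal (Real.exp (δ * (n : ℝ))) * KRW1 lam J 0 n) 0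
      refine le_trans ?_ h0
      have : ENNReal.ofReal (Real.exp (δ * ((0:ℤ) : ℝ))) = 1 := by
        norm_num
      rw [this, one_mul, hKRW 0]
      exact hG0_ge1
    set T : ℝ := (∑' n : ℤ, ENNReal.ofReal (Real.exp (δ * (n : ℝ))) * KRW1 lam J 0 n).toReal
      with hTdef
    have hT1' : 1 ≤ T := by
      rw [hTdef, ← ENNReal.toReal_one]
      exact ENNReal.toReal_mono htilt_lt.ne hT1
    have hTpos : 0 < T := lt_of_lt_of_le one_pos hT1'
    have hgk : ∀ k : ℕ, 0 < (KRW1 lam J 0 (k:ℤ)).toReal := by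
      intro k
      rw [hKtoReal k]
      exact mul_pos (hfpos k) hg0pos
    have hbound : ∀ k : ℕ, 1 ≤ k →
        δ - Real.log T * (1/(k:ℝ)) ≤ -(Real.log ((KRW1 lam J 0 (k:ℤ)).toReal) / (k:ℝ)) := by
      intro k hk
      have hkpos : (0:ℝ) < (k:ℝ) := by
        have : (1:ℝ) ≤ (k:ℝ) := by exact_mod_cast hk
        linarith
      have h1 : Real.exp (δ * (k:ℝ)) * (KRW1 lam J 0 (k:ℤ)).toReal ≤ T := by
        have h2 := ENNReal.toReal_mono htilt_lt.ne (ENNReal.le_tsum (f := fun n : ℤ =>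
          ENNReal.ofReal (Real.exp (δ * (n : ℝ))) * KRW1 lam J 0 n) (k:ℤ))
        rw [ENNReal.toReal_mul, ENNReal.toReal_ofReal (Real.exp_nonneg _)] at h2
        simp only [Int.cast_natCast] at h2
        rw [hTdef]
        exact h2
      have h3 : (KRW1 lam J 0 (k:ℤ)).toReal ≤ T * Real.exp (-(δ*(k:ℝ))) := by
        calc (KRW1 lam J 0 (k:ℤ)).toReal
            = Real.exp (-(δ*(k:ℝ))) * (Real.exp (δ*(k:ℝ)) * (KRW1 lam J 0 (k:ℤ)).toReal) := by
              rw [← mul_assoc, ← Real.exp_add]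
              simp
          _ ≤ Real.exp (-(δ*(k:ℝ))) * T := mul_le_mul_of_nonneg_left h1 (Real.exp_nonneg _)
          _ = T * Real.exp (-(δ*(k:ℝ))) := mul_comm _ _
      have h4 : Real.log ((KRW1 lam J 0 (k:ℤ)).toReal) ≤ Real.log T - δ * (k:ℝ) := by
        calc Real.log ((KRW1 lam J 0 (k:ℤ)).toReal)
            ≤ Real.log (T * Real.exp (-(δ*(k:ℝ)))) := Real.log_le_log (hgk k) h3
          _ = Real.log T + (-(δ*(k:ℝ))) := by
              rw [Real.log_mul hTpos.ne' (Real.exp_pos _).ne', Real.log_exp]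
          _ = Real.log T - δ * (k:ℝ) := by ring
      have h5 : (δ * (k:ℝ) - Real.log T) / (k:ℝ)
          ≤ -(Real.log ((KRW1 lam J 0 (k:ℤ)).toReal)) / (k:ℝ) :=
        (div_le_div_iff_of_pos_right hkpos).mpr (by linarith)
      calc δ - Real.log T * (1/(k:ℝ)) = (δ * (k:ℝ) - Real.log T) / (k:ℝ) := by
            field_simp
        _ ≤ -(Real.log ((KRW1 lam J 0 (k:ℤ)).toReal)) / (k:ℝ) := h5
        _ = -(Real.log ((KRW1 lam J 0 (k:ℤ)).toReal) / (k:ℝ)) := by ring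
    have htend2 : Tendsto (fun k : ℕ => δ - Real.log T * (1/(k:ℝ))) atTop
        (𝓝 (δ - Real.log T * 0)) :=
      tendsto_const_nhds.sub ((tendsto_one_div_atTop_nhds_zero_nat).const_mul _)
    rw [mul_zero, sub_zero] at htend2
    have hδν : δ ≤ hsubadd.lim := by
      refine le_of_tendsto_of_tendsto htend2 htendsto ?_
      filter_upwards [eventually_ge_atTop 1] with k hk using hbound k hk
    exact lt_of_lt_of_le hδpos hδν
  · -- part (ii)
    have h2' : HasSum (fun k : ℕ => 2 * (ψ ((k:ℤ)+1) * Real.exp (-(((k:ℝ)+1)*b)))) 1 := by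
      have h := hnorm.mul_left 2
      have e : (2:ℝ) * 2⁻¹ = 1 := by norm_num
      rwa [e] at h
    set c : ℕ → ℝ := fun k => ψ ((k:ℤ)+1) * (1 + Real.exp (-(2 * ((k:ℝ)+1) * b))) with hcdef
    have hterm : ∀ k : ℕ, 2 * (ψ ((k:ℤ)+1) * Real.exp (-(((k:ℝ)+1)*b))) < c k := by
      intro k
      have hψk : 0 < ψ ((k:ℤ)+1) := hpos _ (by positivity)
      have hkc : (0:ℝ) ≤ (k:ℝ) := Nat.cast_nonneg k
      have hx1 : Real.exp (-(((k:ℝ)+1)*b)) < 1 := by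
        rw [Real.exp_lt_one_iff]
        nlinarith
      have hx0 : 0 < Real.exp (-(((k:ℝ)+1)*b)) := Real.exp_pos _
      have hsq : Real.exp (-(2*((k:ℝ)+1)*b)) = Real.exp (-(((k:ℝ)+1)*b)) ^ 2 := by
        rw [sq, ← Real.exp_add]
        congr 1
        ring
      rw [hcdef]
      simp only
      rw [hsq]
      have h5 : 0 < (1 - Real.exp (-(((k:ℝ)+1)*b)))^2 := pow_pos (by linarith) 2
      nlinarith
    set a : ℕ → ENNReal := fun k =>
      ENNReal.ofReal (2 * (ψ ((k:ℤ)+1) * Real.exp (-(((k:ℝ)+1)*b)))) with hadef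
    have hA : (∑' k : ℕ, a k) = 1 := by
      rw [hadef]
      rw [← ENNReal.ofReal_tsum_of_nonneg
        (fun k => by
          have := (hpos ((k:ℤ)+1) (by positivity)).le
          positivity)
        h2'.summable, h2'.tsum_eq, ENNReal.ofReal_one]
    have hle : ∀ k, a k ≤ ENNReal.ofReal (c k) := by
      intro k
      rw [hadef]
      exact ENNReal.ofReal_le_ofReal (hterm k).le
    have hc0pos : 0 < c 0 := by
      refine lt_of_le_of_lt ?_ (hterm 0)
      have := (hpos ((0:ℤ)+1) (by norm_num)).le
      positivity
    have hlt0 : a 0 < ENNReal.ofReal (c 0) := by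
      rw [hadef]
      exact (ENNReal.ofReal_lt_ofReal_iff hc0pos).mpr (hterm 0)
    rw [← hA]
    rw [ENNReal.tsum_eq_add_tsum_ite (f := a) 0,
      ENNReal.tsum_eq_add_tsum_ite (f := fun k => ENNReal.ofReal (c k)) 0]
    refine lt_of_lt_of_le (ENNReal.add_lt_add_right ?_ hlt0) ?_
    · refine ne_of_lt (lt_of_le_of_lt (ENNReal.tsum_le_tsum fun k => ?_)
        (lt_of_le_of_lt hA.le ENNReal.one_lt_top))
      split
      · exact zero_le
      · exact le_rfl
    · refine add_le_add_right (ENNReal.tsum_le_tsum fun k => ?_) _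
      split
      · exact le_rfl
      · exact hle k

end
end

section
/- For every λ ≥ 0 and all x, y, z ∈ ℤ^d, the self-avoiding walk two-point function satisfies (as an inequality in [0,∞]): G^SAW_λ(x,z)·G^SAW_λ(z,y) ≤ (Σ_{τ∈ℤ^d} G^SAW_λ(0,τ)²)·G^SAW_λ(x,y). -/
open Filter Topology

noncomputable section

/-- The canonical embedding of `ℤ^d` into `ℝ^d`. -/
def ic {d : ℕ} (y : Fin d → ℤ) : Fin d → ℝ := fun i => (y i : ℝ)

/-- `nrm` is a norm on `ℝ^d` invariant under the symmetries of `ℤ^d`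
(coordinate permutations and sign flips). -/
structure IsLatticeNorm (d : ℕ) (nrm : (Fin d → ℝ) → ℝ) : Prop where
  eq_zero : ∀ x : Fin d → ℝ, nrm x = 0 ↔ x = 0
  smul : ∀ (a : ℝ) (x : Fin d → ℝ), nrm (a • x) = |a| * nrm x
  add_le : ∀ x y : Fin d → ℝ, nrm (x + y) ≤ nrm x + nrm y
  symm : ∀ (π : Equiv.Perm (Fin d)) (ε : Fin d → ℝ), (∀ i, ε i = 1 ∨ ε i = -1) →
      ∀ x : Fin d → ℝ, nrm (fun i => ε i * x (π i)) = nrm x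

/-- `ψ` is a positive, lattice-symmetric, sub-exponential prefactor on `ℤ^d \ {0}`. -/
structure IsPrefactor (d : ℕ) (nrm : (Fin d → ℝ) → ℝ) (ψ : (Fin d → ℤ) → ℝ) : Prop where
  pos : ∀ y : Fin d → ℤ, y ≠ 0 → 0 < ψ y
  symm : ∀ (π : Equiv.Perm (Fin d)) (ε : Fin d → ℤ), (∀ i, ε i = 1 ∨ ε i = -1) →
      ∀ y : Fin d → ℤ, ψ (fun i => ε i * y (π i)) = ψ y
  subexp : Filter.Tendsto (fun y : Fin d → ℤ => Real.log (ψ y) / nrm (ic y))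
      Filter.cofinite (nhds 0)

/-- The coupling constants `J_y = ψ(y) e^{-|y|}` for `y ≠ 0`, and `J_0 = 0`. -/
def Jw {d : ℕ} (nrm : (Fin d → ℝ) → ℝ) (ψ : (Fin d → ℤ) → ℝ) (y : Fin d → ℤ) : ℝ :=
  if y = 0 then 0 else ψ y * Real.exp (-(nrm (ic y)))

/-- The killed random walk two-point function
`G^KRW_λ(x,y) = Σ_{k≥0} Σ_{y_1,…,y_k ≠ 0 : y_1+⋯+y_k = y-x} Π_i λ J_{y_i}`,
with values in `[0,∞]`; walks are encoded by their lists of nonzero steps. -/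
def KRW {d : ℕ} (lam : ℝ) (J : (Fin d → ℤ) → ℝ) (x y : Fin d → ℤ) : ENNReal :=
  ∑' l : {l : List (Fin d → ℤ) // (∀ s ∈ l, s ≠ 0) ∧ l.sum = y - x},
    (l.1.map (fun s => ENNReal.ofReal (lam * J s))).prod

/-- `icl lam J x ν` expresses that the inverse correlation length
`-lim_n (1/n) log G^KRW_λ(0, n•x)` exists and equals `ν`. -/
def icl {d : ℕ} (lam : ℝ) (J : (Fin d → ℤ) → ℝ) (x : Fin d → ℤ) (ν : ℝ) : Prop :=
  Filter.Tendsto (fun n : ℕ => -(Real.log ((KRW lam J 0 ((n : ℤ) • x)).toReal) / (n : ℝ)))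
    Filter.atTop (nhds ν)

/-- Euclidean scalar product on `ℝ^d`. -/
def dotR {d : ℕ} (t y : Fin d → ℝ) : ℝ := ∑ i, t i * y i

/-- `t` is dual to `x`: `t·x = |x|` and `t·y ≤ |y|` for all `y`. -/
def IsDual {d : ℕ} (nrm : (Fin d → ℝ) → ℝ) (t x : Fin d → ℝ) : Prop :=
  dotR t x = nrm x ∧ ∀ y : Fin d → ℝ, dotR t y ≤ nrm y

/-- The surcharge function `𝔰_t(y) = |y| - t·y` of a dual vector `t`. -/
def scharge {d : ℕ} (nrm : (Fin d → ℝ) → ℝ) (t : Fin d → ℝ) (y : Fin d → ℤ) : ℝ :=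
  nrm (ic y) - dotR t (ic y)

end

/-- The self-avoiding walk two-point function
`G^SAW_λ(x,y) = Σ_{γ ∈ SAW(x,y)} Π_i λ J_{γ_{i-1}γ_i}`, with values in `[0,∞]`;
a SAW from `x` to `y` is encoded by the list of its vertices after `x`. -/
noncomputable def SAWtpf {d : ℕ} (lam : ℝ) (J : (Fin d → ℤ) → ℝ)
    (x y : Fin d → ℤ) : ENNReal :=
  ∑' p : {p : List (Fin d → ℤ) //
      (x :: p).Nodup ∧ (x :: p).getLast (List.cons_ne_nil x p) = y},
    (((x :: p.1).zip p.1).map (fun q => ENNReal.ofReal (lam * J (q.2 - q.1)))).prod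

/-!
Let `w` be the first vertex of a self-avoiding walk `γ₁ : x → z` lying on `γ₂ : z → y`. Cutting
both walks at `w` yields a walk `x → y` (`γ₁` up to `w`, then `γ₂` after `w`) and two walks
`z → w`, namely `γ₁` after `w` reversed and `γ₂` up to `w`; translated by `-z` these are walks
`0 → w - z`. As `J` is symmetric, this surgery preserves the total weight, and `(γ₁, γ₂)` is
recovered from `w` and the three pieces, so it injects the index set of the left-hand side into
that of `∑_τ G(0,τ)² G(x,y)`.
-/

open List ENNReal

section SelfAvoidingWalks

variable {V : Type*}

def selfAvoidingWalks (a b : V) : Set (List V) :=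
  {L | L.Nodup ∧ L.head? = some a ∧ L.getLast? = some b}

lemma reverse_mem_selfAvoidingWalks {a b : V} {L : List V} (h : L ∈ selfAvoidingWalks a b) :
    L.reverse ∈ selfAvoidingWalks b a :=
  ⟨nodup_reverse.mpr h.1, by simpa using h.2.2, by simpa using h.2.1⟩

lemma append_singleton_mem_selfAvoidingWalks {a b w : V} {A B : List V}
    (h : A ++ w :: B ∈ selfAvoidingWalks a b) : A ++ [w] ∈ selfAvoidingWalks a w := by
  refine ⟨h.1.sublist ?_, ?_, by simp⟩
  · exact (cons_sublist_cons.mpr (nil_sublist B)).append_left A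
  · rw [← h.2.1]; cases A <;> rfl

lemma cons_mem_selfAvoidingWalks {a b w : V} {A B : List V}
    (h : A ++ w :: B ∈ selfAvoidingWalks a b) : w :: B ∈ selfAvoidingWalks w b :=
  ⟨h.1.sublist (sublist_append_right A _), rfl, by rw [← h.2.2, getLast?_append_cons]⟩

lemma append_cons_mem_selfAvoidingWalks {a b c e w : V} {A B C D : List V}
    (h₁ : A ++ w :: B ∈ selfAvoidingWalks a b) (h₂ : C ++ w :: D ∈ selfAvoidingWalks c e)
    (hdisj : ∀ v ∈ A, v ∉ C ++ w :: D) : A ++ w :: D ∈ selfAvoidingWalks a e := by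
  refine ⟨?_, ?_, ?_⟩
  · refine (h₁.1.sublist (sublist_append_left _ _)).append
      (h₂.1.sublist (sublist_append_right _ _)) fun v hvA hvD => hdisj v hvA ?_
    exact mem_append_right C hvD
  · rw [← h₁.2.1]; cases A <;> rfl
  · rw [← h₂.2.2, getLast?_append_cons, getLast?_append_cons]

lemma tsum_cons_eq_tsum_selfAvoidingWalks (g : List V → ℝ≥0∞) (a b : V) :
    ∑' p : {p : List V // (a :: p).Nodup ∧ (a :: p).getLast (cons_ne_nil a p) = b}, g (a :: p) =
      ∑' L : selfAvoidingWalks a b, g L := by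
  let e : {p : List V // (a :: p).Nodup ∧ (a :: p).getLast (cons_ne_nil a p) = b} ≃
      selfAvoidingWalks a b :=
    { toFun p := ⟨a :: p.1, p.2.1, rfl, (getLast_eq_iff_getLast?_eq_some _).mp p.2.2⟩
      invFun L := ⟨L.1.tail, by
        obtain ⟨_ | ⟨a', p⟩, hnodup, hhead, hlast⟩ := L
        · exact absurd hhead (by simp)
        · obtain rfl : a' = a := Option.some_injective _ hhead
          exact ⟨hnodup, (getLast_eq_iff_getLast?_eq_some _).mpr hlast⟩⟩
      left_inv p := rfl
      right_inv L := Subtype.ext (cons_head?_tail L.2.2.1) }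
  exact e.tsum_eq (g ·)

variable [AddGroup V]

lemma map_sub_mem_selfAvoidingWalks {a b : V} {L : List V} (h : L ∈ selfAvoidingWalks a b)
    (c : V) : L.map (· - c) ∈ selfAvoidingWalks (a - c) (b - c) :=
  ⟨h.1.map sub_left_injective, by simp [h.2.1], by simp [h.2.2]⟩

noncomputable def walkWeight (f : V → ℝ≥0∞) (L : List V) : ℝ≥0∞ :=
  ((L.zip L.tail).map fun q => f (q.2 - q.1)).prod

variable (f : V → ℝ≥0∞)

@[simp] lemma walkWeight_singleton (a : V) : walkWeight f [a] = 1 := rfl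

@[simp] lemma walkWeight_cons_cons (a b : V) (L : List V) :
    walkWeight f (a :: b :: L) = f (b - a) * walkWeight f (b :: L) := rfl

lemma walkWeight_append_cons (A : List V) (w : V) (B : List V) :
    walkWeight f (A ++ w :: B) = walkWeight f (A ++ [w]) * walkWeight f (w :: B) := by
  induction A with
  | nil => simp
  | cons a A ih =>
    cases A with
    | nil => simp
    | cons b A => simp only [cons_append, walkWeight_cons_cons] at ih ⊢; rw [ih, mul_assoc]

lemma walkWeight_reverse (hf : ∀ v, f (-v) = f v) (L : List V) :
    walkWeight f L.reverse = walkWeight f L := by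
  induction L with
  | nil => rfl
  | cons a L ih =>
    cases L with
    | nil => rfl
    | cons b L =>
      rw [reverse_cons, reverse_cons, append_assoc, singleton_append, walkWeight_append_cons,
        ← reverse_cons, ih, walkWeight_cons_cons, walkWeight_cons_cons, walkWeight_singleton,
        ← neg_sub b a, hf, mul_one, mul_comm]

lemma walkWeight_map_sub (c : V) (L : List V) : walkWeight f (L.map (· - c)) = walkWeight f L := by
  induction L with
  | nil => rfl
  | cons a L ih =>
    cases L with
    | nil => rfl
    | cons b L =>
      simp only [map_cons, walkWeight_cons_cons] at ih ⊢
      rw [ih, sub_sub_sub_cancel_right]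

end SelfAvoidingWalks

structure Crossing {V : Type*} (γ₁ γ₂ : List V) where
  pre₁ : List V
  meet : V
  post₁ : List V
  pre₂ : List V
  post₂ : List V
  eq₁ : γ₁ = pre₁ ++ meet :: post₁
  eq₂ : γ₂ = pre₂ ++ meet :: post₂
  pre₁_not_mem : ∀ v ∈ pre₁, v ∉ γ₂

namespace Crossing

variable {V : Type*} {γ₁ γ₂ : List V}

lemma nonempty_of_mem {v : V} (h₁ : v ∈ γ₁) (h₂ : v ∈ γ₂) : Nonempty (Crossing γ₁ γ₂) := by
  classical
  obtain ⟨w, hw⟩ := Option.isSome_iff_exists.mp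
    (find?_isSome (p := fun u => decide (u ∈ γ₂)).mpr ⟨v, h₁, by simpa using h₂⟩)
  obtain ⟨hw₂, A, B, rfl, hA⟩ := find?_eq_some_iff_append.mp hw
  obtain ⟨C, D, hCD⟩ := append_of_mem (of_decide_eq_true hw₂)
  exact ⟨⟨A, w, B, C, D, rfl, hCD, fun a ha => by simpa using hA a ha⟩⟩

variable (c : Crossing γ₁ γ₂)

lemma meet_mem_right : c.meet ∈ γ₂ := by
  have h := mem_append_right c.pre₂ (mem_cons_self (a := c.meet) (l := c.post₂))
  rwa [← c.eq₂] at h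

def splice : List V := c.pre₁ ++ c.meet :: c.post₂

variable {x y z : V}

lemma splice_mem (h₁ : γ₁ ∈ selfAvoidingWalks x z) (h₂ : γ₂ ∈ selfAvoidingWalks z y) :
    c.splice ∈ selfAvoidingWalks x y := by
  obtain ⟨A, w, B, C, D, rfl, rfl, hA⟩ := c
  exact append_cons_mem_selfAvoidingWalks h₁ h₂ hA

variable [AddGroup V]

def retrace (z : V) : List V := (c.meet :: c.post₁).reverse.map (· - z)

def approach (z : V) : List V := (c.pre₂ ++ [c.meet]).map (· - z)

lemma retrace_mem (h₁ : γ₁ ∈ selfAvoidingWalks x z) :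
    c.retrace z ∈ selfAvoidingWalks 0 (c.meet - z) := by
  obtain ⟨A, w, B, C, D, rfl, rfl, -⟩ := c
  have h := map_sub_mem_selfAvoidingWalks
    (reverse_mem_selfAvoidingWalks (cons_mem_selfAvoidingWalks h₁)) z
  rwa [sub_self] at h

lemma approach_mem (h₂ : γ₂ ∈ selfAvoidingWalks z y) :
    c.approach z ∈ selfAvoidingWalks 0 (c.meet - z) := by
  obtain ⟨A, w, B, C, D, rfl, rfl, -⟩ := c
  have h := map_sub_mem_selfAvoidingWalks (append_singleton_mem_selfAvoidingWalks h₂) z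
  rwa [sub_self] at h

variable (f : V → ℝ≥0∞)

lemma walkWeight_mul_walkWeight (hf : ∀ v, f (-v) = f v) :
    walkWeight f γ₁ * walkWeight f γ₂ =
      walkWeight f (c.retrace z) * walkWeight f (c.approach z) * walkWeight f c.splice := by
  obtain ⟨A, w, B, C, D, rfl, rfl, -⟩ := c
  simp only [retrace, approach, splice, walkWeight_map_sub, walkWeight_reverse f hf]
  rw [walkWeight_append_cons f A w B, walkWeight_append_cons f C w D,
    walkWeight_append_cons f A w D]
  ring

lemma eq_of_surgery_eq {γ₁' γ₂' : List V} (c' : Crossing γ₁' γ₂') (hγ₂ : γ₂.Nodup)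
    (hmeet : c.meet = c'.meet) (hretrace : c.retrace z = c'.retrace z)
    (happroach : c.approach z = c'.approach z) (hsplice : c.splice = c'.splice) :
    γ₁ = γ₁' ∧ γ₂ = γ₂' := by
  have hwA : c.meet ∉ c.pre₁ := fun h => c.pre₁_not_mem _ h c.meet_mem_right
  have hwD : c.meet ∉ c.post₂ := by
    rw [c.eq₂] at hγ₂
    exact (nodup_cons.mp (nodup_append.mp hγ₂).2.1).1
  obtain ⟨hA, -, hD⟩ := (append_cons_inj_of_notMem (hmeet ▸ hwA) (hmeet ▸ hwD)).mp hsplice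
  have hB := reverse_injective (map_injective_iff.mpr sub_left_injective hretrace)
  have hC := map_injective_iff.mpr sub_left_injective happroach
  rw [hmeet, append_left_inj] at hC
  exact ⟨by rw [c.eq₁, c'.eq₁, hA, hB], by rw [c.eq₂, c'.eq₂, hC, hmeet, hD]⟩

end Crossing

section TwoPointFunction

variable {V : Type*} [AddGroup V] (f : V → ℝ≥0∞)

noncomputable def sawSum (a b : V) : ℝ≥0∞ := ∑' L : selfAvoidingWalks a b, walkWeight f L

variable {x y z : V}

noncomputable def surgery (r : selfAvoidingWalks x z × selfAvoidingWalks z y) :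
    Σ τ : V, selfAvoidingWalks 0 τ × selfAvoidingWalks 0 τ × selfAvoidingWalks x y :=
  let c := Classical.choice <|
    Crossing.nonempty_of_mem (mem_of_mem_getLast? r.1.2.2.2) (mem_of_mem_head? r.2.2.2.1)
  ⟨c.meet - z, ⟨c.retrace z, c.retrace_mem r.1.2⟩, ⟨c.approach z, c.approach_mem r.2.2⟩,
    ⟨c.splice, c.splice_mem r.1.2 r.2.2⟩⟩

lemma surgery_injective : Function.Injective (surgery (x := x) (y := y) (z := z)) := by
  refine Function.Injective.of_comp (f := fun u => (u.1, u.2.1.1, u.2.2.1.1, u.2.2.2.1))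
    fun r r' h => ?_
  simp only [Function.comp, surgery, Prod.mk.injEq] at h
  obtain ⟨hτ, hβ, hβ', hσ⟩ := h
  obtain ⟨h₁, h₂⟩ := Crossing.eq_of_surgery_eq _ _ r.2.2.1 (sub_left_injective hτ) hβ hβ' hσ
  exact Prod.ext (Subtype.ext h₁) (Subtype.ext h₂)

lemma tsum_sigma_walkWeight :
    ∑' u : Σ τ : V, selfAvoidingWalks 0 τ × selfAvoidingWalks 0 τ × selfAvoidingWalks x y,
      walkWeight f u.2.1 * walkWeight f u.2.2.1 * walkWeight f u.2.2.2 =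
    (∑' τ, sawSum f 0 τ ^ 2) * sawSum f x y := by
  rw [ENNReal.tsum_sigma', ← ENNReal.tsum_mul_right]
  refine tsum_congr fun τ => ?_
  simp only [ENNReal.tsum_prod', ENNReal.tsum_mul_left, ENNReal.tsum_mul_right, sawSum, sq]

theorem sawSum_mul_le (hf : ∀ v, f (-v) = f v) (x y z : V) :
    sawSum f x z * sawSum f z y ≤ (∑' τ, sawSum f 0 τ ^ 2) * sawSum f x y := by
  let F (u : Σ τ : V, selfAvoidingWalks 0 τ × selfAvoidingWalks 0 τ × selfAvoidingWalks x y) :=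
    walkWeight f u.2.1 * walkWeight f u.2.2.1 * walkWeight f u.2.2.2
  calc sawSum f x z * sawSum f z y
      = ∑' r : selfAvoidingWalks x z × selfAvoidingWalks z y,
          walkWeight f r.1 * walkWeight f r.2 := by
        simp only [ENNReal.tsum_prod', ENNReal.tsum_mul_left, ENNReal.tsum_mul_right, sawSum]
    _ = ∑' r : selfAvoidingWalks x z × selfAvoidingWalks z y, F (surgery r) :=
        tsum_congr fun r => Crossing.walkWeight_mul_walkWeight _ f hf
    _ ≤ ∑' u, F u := ENNReal.tsum_comp_le_tsum_of_injective surgery_injective F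
    _ = _ := tsum_sigma_walkWeight f

end TwoPointFunction

lemma Jw_neg {d : ℕ} {nrm : (Fin d → ℝ) → ℝ} {ψ : (Fin d → ℤ) → ℝ} (hnrm : IsLatticeNorm d nrm)
    (hψ : IsPrefactor d nrm ψ) (v : Fin d → ℤ) : Jw nrm ψ (-v) = Jw nrm ψ v := by
  have hψv : ψ (-v) = ψ v := by
    convert hψ.symm 1 (fun _ => -1) (fun _ => Or.inr rfl) v using 2
    ext i
    simp
  have hnrmv : nrm (ic (-v)) = nrm (ic v) := by
    convert hnrm.symm 1 (fun _ => -1) (fun _ => Or.inr rfl) (ic v) using 2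
    ext i
    simp [ic]
  simp only [Jw, neg_eq_zero, hψv, hnrmv]

lemma SAWtpf_eq_sawSum {d : ℕ} (lam : ℝ) (J : (Fin d → ℤ) → ℝ) (x y : Fin d → ℤ) :
    SAWtpf lam J x y = sawSum (fun v => ENNReal.ofReal (lam * J v)) x y :=
  tsum_cons_eq_tsum_selfAvoidingWalks (walkWeight fun v => ENNReal.ofReal (lam * J v)) x y

theorem statement16_general {d : ℕ}
    (nrm : (Fin d → ℝ) → ℝ) (hnrm : IsLatticeNorm d nrm)
    (ψ : (Fin d → ℤ) → ℝ) (hψ : IsPrefactor d nrm ψ)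
    (lam : ℝ)
    (x y z : Fin d → ℤ) :
    SAWtpf lam (Jw nrm ψ) x z * SAWtpf lam (Jw nrm ψ) z y ≤
      (∑' τ : Fin d → ℤ, SAWtpf lam (Jw nrm ψ) 0 τ ^ 2) *
        SAWtpf lam (Jw nrm ψ) x y := by
  simp only [SAWtpf_eq_sawSum]
  exact sawSum_mul_le _ (fun v => by rw [Jw_neg hnrm hψ]) x y z

/-- Submultiplicativity-type inequality for the SAW two-point
function: `G^SAW_λ(x,z) G^SAW_λ(z,y) ≤ (Σ_τ G^SAW_λ(0,τ)²) G^SAW_λ(x,y)`,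
as an inequality in `[0,∞]`. -/
theorem statement16 {d : ℕ} (hd : 1 ≤ d)
    (nrm : (Fin d → ℝ) → ℝ) (hnrm : IsLatticeNorm d nrm)
    (ψ : (Fin d → ℤ) → ℝ) (hψ : IsPrefactor d nrm ψ)
    (hJ1 : HasSum (fun y : Fin d → ℤ => Jw nrm ψ y) 1)
    (lam : ℝ) (hlam : 0 ≤ lam)
    (x y z : Fin d → ℤ) :
    SAWtpf lam (Jw nrm ψ) x z * SAWtpf lam (Jw nrm ψ) z y ≤
      (∑' τ : Fin d → ℤ, SAWtpf lam (Jw nrm ψ) 0 τ ^ 2) *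
        SAWtpf lam (Jw nrm ψ) x y :=
  statement16_general nrm hnrm ψ hψ lam x y z
end
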